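/- Let G be a group, A a finite cyclic subgroup of the center of G, and suppose (H,N₁) and (H,N₂) are special pairs in G with N₂ ≤ N₁. Then: (1) N₁H = N₂H, and consequently N₁ = (N₁∩H)·N₂; (2) Z(N₁) = (N₂∩Z(G))·(N₁∩H) = (N₁∩Z(G))·(N₂∩H); (3) N₁∩Z(G) = (N₂∩Z(G))·(H∩N₁∩Z(G)). -/

import Mathlib

open scoped commutatorElement

/-- `(H, N)` is a special pair in `G` (with respect to a subgroup `A` of the center of `G`):
`H` and `N` both contain `A`, `H` is a normal subgroup of finite index, every element of `N`
commutes with every element of `H`, `⁅n, g⁆ ∈ A` for all `n ∈ N`, `g ∈ G`, and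
`Z_G(H ⊓ N) = NH`. -/
structure IsSpecialPair {G : Type*} [Group G] (A H N : Subgroup G) : Prop where
  A_le_H : A ≤ H
  A_le_N : A ≤ N
  normal : H.Normal
  finiteIndex : H.FiniteIndex
  commute : ∀ n ∈ N, ∀ h ∈ H, Commute n h
  comm_mem : ∀ n ∈ N, ∀ g : G, ⁅n, g⁆ ∈ A
  centralizer_inf_eq : Subgroup.centralizer ((H ⊓ N : Subgroup G) : Set G) = N ⊔ H

namespace SpecialPairAux

variable {G : Type*} [Group G] {A : Subgroup G}

lemma central_comm (hA : A ≤ Subgroup.center G) (a b : ↥A) : a * b = b * a :=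
  Subtype.ext (Subgroup.mem_center_iff.mp (hA b.2) a)

lemma comm_right_mul (hA : A ≤ Subgroup.center G) {n g₂ : G} (g₁ : G)
    (h2 : ⁅n, g₂⁆ ∈ A) : ⁅n, g₁ * g₂⁆ = ⁅n, g₁⁆ * ⁅n, g₂⁆ := by
  have hc : g₁ * ⁅n, g₂⁆ = ⁅n, g₂⁆ * g₁ := Subgroup.mem_center_iff.mp (hA h2) g₁
  calc ⁅n, g₁ * g₂⁆ = ⁅n, g₁⁆ * (g₁ * ⁅n, g₂⁆ * g₁⁻¹) := by
        simp only [commutatorElement_def]; group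
    _ = ⁅n, g₁⁆ * (⁅n, g₂⁆ * g₁ * g₁⁻¹) := by rw [hc]
    _ = ⁅n, g₁⁆ * ⁅n, g₂⁆ := by group

lemma comm_left_mul (hA : A ≤ Subgroup.center G) {n₁ n₂ g : G}
    (h2 : ⁅n₂, g⁆ ∈ A) : ⁅n₁ * n₂, g⁆ = ⁅n₁, g⁆ * ⁅n₂, g⁆ := by
  have hc : n₁ * ⁅n₂, g⁆ = ⁅n₂, g⁆ * n₁ := Subgroup.mem_center_iff.mp (hA h2) n₁
  have hc' : ⁅n₁, g⁆ * ⁅n₂, g⁆ = ⁅n₂, g⁆ * ⁅n₁, g⁆ :=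
    Subgroup.mem_center_iff.mp (hA h2) _
  calc ⁅n₁ * n₂, g⁆ = n₁ * ⁅n₂, g⁆ * n₁⁻¹ * ⁅n₁, g⁆ := by
        simp only [commutatorElement_def]; group
    _ = ⁅n₂, g⁆ * n₁ * n₁⁻¹ * ⁅n₁, g⁆ := by rw [hc]
    _ = ⁅n₂, g⁆ * ⁅n₁, g⁆ := by group
    _ = ⁅n₁, g⁆ * ⁅n₂, g⁆ := hc'.symm

lemma comm_inv (hA : A ≤ Subgroup.center G) {n g : G}
    (h2 : ⁅n, g⁆ ∈ A) : ⁅n⁻¹, g⁆ = ⁅n, g⁆⁻¹ := by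
  have h := comm_left_mul (n₁ := n⁻¹) hA h2
  rw [inv_mul_cancel, commutatorElement_one_left] at h
  exact eq_inv_of_mul_eq_one_left h.symm

/-- The homomorphism `g ↦ ⁅x, g⁆` attached to an element whose commutators lie
in the central subgroup `A`. -/
def commHom (hA : A ≤ Subgroup.center G) (x : G) (hx : ∀ g : G, ⁅x, g⁆ ∈ A) :
    G →* ↥A where
  toFun g := ⟨⁅x, g⁆, hx g⟩
  map_one' := Subtype.ext (commutatorElement_one_right x)
  map_mul' g₁ g₂ := Subtype.ext (comm_right_mul hA g₁ (hx g₂))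

lemma commHom_ker (hA : A ≤ Subgroup.center G) (x : G) (hx : ∀ g : G, ⁅x, g⁆ ∈ A)
    {P : Subgroup G} (hxc : ∀ p ∈ P, Commute x p) : P ≤ (commHom hA x hx).ker := by
  intro p hp
  exact Subtype.ext (commutatorElement_eq_one_iff_commute.mpr (hxc p hp))

/-- The induced homomorphism on `G ⧸ P`. -/
def commHomQ (hA : A ≤ Subgroup.center G) (P : Subgroup G) [P.Normal]
    (x : G) (hx : ∀ g : G, ⁅x, g⁆ ∈ A) (hxc : ∀ p ∈ P, Commute x p) :
    G ⧸ P →* ↥A :=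
  QuotientGroup.lift P (commHom hA x hx) (commHom_ker hA x hx hxc)

@[simp] lemma commHomQ_mk (hA : A ≤ Subgroup.center G) (P : Subgroup G) [P.Normal]
    (x : G) (hx : ∀ g : G, ⁅x, g⁆ ∈ A) (hxc : ∀ p ∈ P, Commute x p) (g : G) :
    commHomQ hA P x hx hxc (g : G ⧸ P) = ⟨⁅x, g⁆, hx g⟩ :=
  rfl

/-- Counting: for a finite commutative group `B` and finite cyclic `A'`,
`|Hom(B, A')| ≤ |B|`. -/
lemma card_monoidHom_le (B A' : Type*) [CommGroup B] [Finite B]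
    [Group A'] [IsCyclic A'] [Finite A'] :
    Nat.card (B →* A') ≤ Nat.card B := by
  classical
  set m := Nat.card A' with hm
  have hm0 : m ≠ 0 := Nat.card_pos.ne'
  haveI : NeZero ((m : ℕ) : ℂ) := ⟨Nat.cast_ne_zero.mpr hm0⟩
  haveI : NeZero m := ⟨hm0⟩
  have hcard : Nat.card A' = Nat.card (rootsOfUnity m ℂ) := by
    rw [HasEnoughRootsOfUnity.natCard_rootsOfUnity ℂ m]
  let e : A' ≃* (rootsOfUnity m ℂ) := mulEquivOfCyclicCardEq hcard
  let ι : A' →* ℂˣ := (Subgroup.subtype _).comp e.toMonoidHom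
  have hι : Function.Injective ι := (rootsOfUnity m ℂ).subtype_injective.comp e.injective
  have hcomp : Function.Injective (fun f : B →* A' => ι.comp f) := by
    intro f g hfg
    ext b
    apply hι
    exact congrArg (fun F : B →* ℂˣ => F b) hfg
  haveI : NeZero ((Monoid.exponent B : ℕ) : ℂ) :=
    ⟨Nat.cast_ne_zero.mpr Monoid.exponent_ne_zero_of_finite⟩
  obtain ⟨E⟩ := CommGroup.monoidHom_mulEquiv_of_hasEnoughRootsOfUnity B ℂ
  haveI : Finite (B →* ℂˣ) := Finite.of_equiv B E.symm.toEquiv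
  calc Nat.card (B →* A') ≤ Nat.card (B →* ℂˣ) := Nat.card_le_card_of_injective _ hcomp
    _ = Nat.card B := Nat.card_congr E.toEquiv

end SpecialPairAux

open SpecialPairAux

lemma IsSpecialPair.N_normal {G : Type*} [Group G] {A H N : Subgroup G}
    (hsp : IsSpecialPair A H N) : N.Normal := by
  constructor
  intro n hn g
  have h : g * n * g⁻¹ = ⁅n, g⁆⁻¹ * n := by
    simp only [commutatorElement_def]; group
  rw [h]
  exact mul_mem (inv_mem (hsp.A_le_N (hsp.comm_mem n hn g))) hn

/-- Core lemma: if all commutators of `z` lie in `A` and `z` centralizes `N ⊔ H`, then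
`z` agrees with some element of `H ⊓ N` up to a central element. -/
lemma IsSpecialPair.core {G : Type*} [Group G] {A H N : Subgroup G}
    (hA : A ≤ Subgroup.center G) (hcyc : IsCyclic ↥A) (hfin : Finite ↥A)
    (hsp : IsSpecialPair A H N) {z : G}
    (hzA : ∀ g : G, ⁅z, g⁆ ∈ A)
    (hzc : ∀ p ∈ N ⊔ H, Commute z p) :
    ∃ h ∈ H ⊓ N, z * h⁻¹ ∈ Subgroup.center G := by
  classical
  letI cgA : CommGroup ↥A := { (inferInstance : Group ↥A) with
    mul_comm := central_comm hA }
  haveI := hsp.normal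
  haveI := hsp.finiteIndex
  haveI := hsp.N_normal
  haveI hPn : (N ⊔ H).Normal := Subgroup.sup_normal N H
  haveI : (N ⊔ H).FiniteIndex := Subgroup.finiteIndex_of_le le_sup_right
  haveI hQfin : Finite (G ⧸ (N ⊔ H)) := inferInstance
  -- facts about elements of H ⊓ N
  have hMA : ∀ x ∈ H ⊓ N, ∀ g : G, ⁅x, g⁆ ∈ A := fun x hx g =>
    hsp.comm_mem x (Subgroup.mem_inf.mp hx).2 g
  have hMC : ∀ x ∈ H ⊓ N, ∀ p ∈ N ⊔ H, Commute x p := by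
    intro x hx p hp
    obtain ⟨hxH, hxN⟩ := Subgroup.mem_inf.mp hx
    have hle : N ⊔ H ≤ Subgroup.centralizer {x} := by
      refine sup_le (fun n hn => ?_) (fun h hh => ?_)
      · exact Subgroup.mem_centralizer_iff.mpr fun y hy => by
          rw [Set.mem_singleton_iff] at hy; rw [hy]
          exact (hsp.commute n hn x hxH).symm.eq
      · exact Subgroup.mem_centralizer_iff.mpr fun y hy => by
          rw [Set.mem_singleton_iff] at hy; rw [hy]
          exact (hsp.commute x hxN h hh).eq
    exact Subgroup.mem_centralizer_iff.mp (hle hp) x (Set.mem_singleton x)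
  -- the homomorphism Ψ : H ⊓ N →* (G ⧸ (N ⊔ H) →* A)
  let ψ : ↥(H ⊓ N) → (G ⧸ (N ⊔ H) →* ↥A) := fun x =>
    commHomQ hA (N ⊔ H) x.1 (hMA x.1 x.2) (hMC x.1 x.2)
  have hψ_apply : ∀ (x : ↥(H ⊓ N)) (g : G),
      ((ψ x (g : G ⧸ (N ⊔ H)) : ↥A) : G) = ⁅(x : G), g⁆ := fun x g => rfl
  let Ψ : ↥(H ⊓ N) →* (G ⧸ (N ⊔ H) →* ↥A) := MonoidHom.mk' ψ (by
    intro x y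
    ext q
    show (⁅((x * y : ↥(H ⊓ N)) : G), q⁆ : G) = ⁅(x : G), q⁆ * ⁅(y : G), q⁆
    exact comm_left_mul hA (hMA y.1 y.2 q))
  haveI : Finite (G ⧸ (N ⊔ H) →* ↥A) :=
    Finite.of_injective (fun f => (f : G ⧸ (N ⊔ H) → ↥A)) DFunLike.coe_injective
  set D := Ψ.range with hDdef
  haveI : Finite ↥D := inferInstance
  -- separation
  have hsep : ∀ g : G, (∀ x : ↥(H ⊓ N), Ψ x (g : G ⧸ (N ⊔ H)) = 1) →
      ((g : G ⧸ (N ⊔ H)) = 1) := by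
    intro g hg
    rw [QuotientGroup.eq_one_iff]
    rw [← hsp.centralizer_inf_eq]
    refine Subgroup.mem_centralizer_iff.mpr fun x hx => ?_
    have h2 : (⁅x, g⁆ : G) = 1 := by
      have := congrArg Subtype.val (hg ⟨x, hx⟩)
      exact this
    exact (commutatorElement_eq_one_iff_commute.mp h2).eq
  -- evaluation map
  let ev : G ⧸ (N ⊔ H) → (↥D →* ↥A) := fun q =>
    { toFun := fun f => f.1 q
      map_one' := rfl
      map_mul' := fun f g => rfl }
  have hev_inj : Function.Injective ev := by
    intro q q'
    refine QuotientGroup.induction_on q fun g => ?_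
    refine QuotientGroup.induction_on q' fun g' => ?_
    intro h
    have key : ∀ x : ↥(H ⊓ N), Ψ x ((g⁻¹ * g' : G) : G ⧸ (N ⊔ H)) = 1 := by
      intro x
      have hgg' : Ψ x (g : G ⧸ (N ⊔ H)) = Ψ x (g' : G ⧸ (N ⊔ H)) := by
        have := congrArg (fun F : ↥D →* ↥A => F ⟨Ψ x, ⟨x, rfl⟩⟩) h
        simpa [ev] using this
      have hcast : ((g⁻¹ * g' : G) : G ⧸ (N ⊔ H)) =
          ((g : G ⧸ (N ⊔ H)))⁻¹ * ((g' : G ⧸ (N ⊔ H))) := by rfl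
      rw [hcast, map_mul, map_inv, hgg', inv_mul_cancel]
    have h1 := hsep _ key
    have hmem : ((g : G ⧸ (N ⊔ H)))⁻¹ * ((g' : G ⧸ (N ⊔ H))) = 1 := h1
    exact (inv_mul_eq_one.mp hmem)
  -- multiplicativity of ev and commutativity of the quotient
  have hev_mul : ∀ q q' : G ⧸ (N ⊔ H), ev (q * q') = ev q * ev q' := by
    intro q q'
    ext f
    exact congrArg Subtype.val (f.1.map_mul q q')
  letI : CommGroup (G ⧸ (N ⊔ H)) := { (inferInstance : Group (G ⧸ (N ⊔ H))) with
    mul_comm := fun q q' => hev_inj (by rw [hev_mul, hev_mul, mul_comm]) }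
  haveI : Finite (↥D →* ↥A) :=
    Finite.of_injective (fun f => (f : ↥D → ↥A)) DFunLike.coe_injective
  -- counting
  have hc1 : Nat.card (G ⧸ (N ⊔ H)) ≤ Nat.card (↥D →* ↥A) :=
    Nat.card_le_card_of_injective ev hev_inj
  have hc2 : Nat.card (↥D →* ↥A) ≤ Nat.card ↥D := card_monoidHom_le _ _
  have hc3 : Nat.card ↥D ≤ Nat.card (G ⧸ (N ⊔ H) →* ↥A) :=
    Nat.card_le_card_of_injective _ Subtype.val_injective
  have hc4 : Nat.card (G ⧸ (N ⊔ H) →* ↥A) ≤ Nat.card (G ⧸ (N ⊔ H)) :=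
    card_monoidHom_le _ _
  have hD : D = ⊤ := Subgroup.eq_top_of_card_eq _
    (le_antisymm hc3 (hc4.trans (hc1.trans hc2)))
  -- conclude
  let fz : G ⧸ (N ⊔ H) →* ↥A := commHomQ hA (N ⊔ H) z hzA hzc
  have hfz : fz ∈ D := hD ▸ Subgroup.mem_top fz
  obtain ⟨x, hx⟩ := hfz
  refine ⟨x.1, x.2, Subgroup.mem_center_iff.mpr fun g => ?_⟩
  have hxg : (⁅(x : G), g⁆ : G) = ⁅z, g⁆ := by
    have := congrArg (fun F : G ⧸ (N ⊔ H) →* ↥A => ((F (g : G ⧸ (N ⊔ H)) : ↥A) : G)) hx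
    exact this
  have hinv : (⁅(x : G)⁻¹, g⁆ : G) = ⁅z, g⁆⁻¹ := by
    rw [comm_inv hA (hMA x.1 x.2 g), hxg]
  have hcomm : Commute (z * (x : G)⁻¹) g := by
    rw [← commutatorElement_eq_one_iff_commute]
    have e1 : ⁅z * (x : G)⁻¹, g⁆ = ⁅z, g⁆ * ⁅(x : G)⁻¹, g⁆ :=
      comm_left_mul hA (hMA _ (inv_mem x.2) g)
    rw [e1, hinv, mul_inv_cancel]
  exact hcomm.symm.eq

open scoped Pointwise in
/-- If `(H, N₁)` and `(H, N₂)` are special pairs in `G` with `N₂ ≤ N₁`, then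
`N₁H = N₂H` (so `N₁ = (N₁ ∩ H)·N₂`),
`Z(N₁) = (N₂ ∩ Z(G))·(N₁ ∩ H) = (N₁ ∩ Z(G))·(N₂ ∩ H)`, and
`N₁ ∩ Z(G) = (N₂ ∩ Z(G))·(H ∩ N₁ ∩ Z(G))`. -/
theorem stmt_16 {G : Type*} [Group G] (A H N₁ N₂ : Subgroup G)
    (hA : A ≤ Subgroup.center G) (hcyc : IsCyclic A) (hfin : Finite A)
    (hsp1 : IsSpecialPair A H N₁) (hsp2 : IsSpecialPair A H N₂) (hle : N₂ ≤ N₁) :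
    (N₁ ⊔ H = N₂ ⊔ H) ∧
    (N₁ = (N₁ ⊓ H) ⊔ N₂) ∧
    (N₁ ⊓ Subgroup.centralizer (N₁ : Set G) =
      (N₂ ⊓ Subgroup.center G) ⊔ (N₁ ⊓ H)) ∧
    (N₁ ⊓ Subgroup.centralizer (N₁ : Set G) =
      (N₁ ⊓ Subgroup.center G) ⊔ (N₂ ⊓ H)) ∧
    (N₁ ⊓ Subgroup.center G =
      (N₂ ⊓ Subgroup.center G) ⊔ (H ⊓ N₁ ⊓ Subgroup.center G)) := by
  haveI hHn := hsp1.normal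
  haveI hN1n := hsp1.N_normal
  haveI hN2n := hsp2.N_normal
  -- (1a)
  have h1a : N₁ ⊔ H = N₂ ⊔ H := by
    refine le_antisymm ?_ (sup_le_sup_right hle H)
    rw [← hsp1.centralizer_inf_eq, ← hsp2.centralizer_inf_eq]
    exact Subgroup.centralizer_le (SetLike.coe_subset_coe.mpr (inf_le_inf_left H hle))
  -- decomposition in a join with a normal second factor
  have decomp : ∀ {K K' : Subgroup G}, K'.Normal → ∀ {x : G}, x ∈ K ⊔ K' →
      ∃ n ∈ K, ∃ h ∈ K', x = n * h := by
    intro K K' hK' x hx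
    haveI := hK'
    have hx' : x ∈ ((K : Set G) * (K' : Set G)) := by
      rw [← Subgroup.mul_normal K K']; exact hx
    obtain ⟨n, hn, h, hh, hxe⟩ := hx'
    exact ⟨n, hn, h, hh, hxe.symm⟩
  -- (1b)
  have h1b : N₁ = (N₁ ⊓ H) ⊔ N₂ := by
    refine le_antisymm ?_ (sup_le inf_le_left hle)
    intro n hn
    have hn' : n ∈ N₂ ⊔ H := h1a ▸ ((le_sup_left : N₁ ≤ N₁ ⊔ H) hn)
    obtain ⟨n₂, hn₂, h, hh, rfl⟩ := decomp hHn hn'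
    have hhN₁ : h ∈ N₁ := by
      have := mul_mem (inv_mem (hle hn₂)) hn
      simpa [mul_assoc] using this
    rw [sup_comm]
    exact Subgroup.mul_mem_sup hn₂ (Subgroup.mem_inf.mpr ⟨hhN₁, hh⟩)
  -- commuting with all of N₂ ⊔ H
  have hcomm2 : ∀ {w : G}, (∀ n ∈ N₂, Commute w n) → (∀ h ∈ H, Commute w h) →
      ∀ p ∈ N₂ ⊔ H, Commute w p := by
    intro w hN hH p hp
    have hle' : N₂ ⊔ H ≤ Subgroup.centralizer {w} := by
      refine sup_le (fun n hn => Subgroup.mem_centralizer_iff.mpr ?_)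
        (fun h hh => Subgroup.mem_centralizer_iff.mpr ?_)
      · intro y hy; rw [Set.mem_singleton_iff] at hy; rw [hy]; exact (hN n hn).eq
      · intro y hy; rw [Set.mem_singleton_iff] at hy; rw [hy]; exact (hH h hh).eq
    exact Subgroup.mem_centralizer_iff.mp (hle' hp) w (Set.mem_singleton w)
  -- (2a) forward
  have fwd2a : N₁ ⊓ Subgroup.centralizer (N₁ : Set G) ≤
      (N₂ ⊓ Subgroup.center G) ⊔ (N₁ ⊓ H) := by
    intro z hz
    obtain ⟨hz1, hz2⟩ := Subgroup.mem_inf.mp hz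
    have hzc : ∀ n ∈ N₁, Commute z n := fun n hn =>
      (Subgroup.mem_centralizer_iff.mp hz2 n hn).symm
    have hzmem : z ∈ (N₁ ⊓ H) ⊔ N₂ := h1b ▸ hz1
    obtain ⟨h₁, hh₁, n₂', hn₂', rfl⟩ := decomp hN2n hzmem
    obtain ⟨hh₁N, hh₁H⟩ := Subgroup.mem_inf.mp hh₁
    have hn₂'c : ∀ p ∈ N₂ ⊔ H, Commute n₂' p := by
      refine hcomm2 (fun n hn => ?_) (fun h hh => hsp2.commute n₂' hn₂' h hh)
      have c1 : Commute h₁⁻¹ n := (hsp2.commute n hn h₁ hh₁H).symm.inv_left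
      have c2 : Commute (h₁ * n₂') n := hzc n (hle hn)
      simpa [inv_mul_cancel_left] using Commute.mul_left c1 c2
    obtain ⟨x, hxHN, hcen⟩ :=
      IsSpecialPair.core hA hcyc hfin hsp2 (hsp2.comm_mem n₂' hn₂') hn₂'c
    obtain ⟨hxH, hxN₂⟩ := Subgroup.mem_inf.mp hxHN
    have hx1 : h₁ * (n₂' * x⁻¹) = (n₂' * x⁻¹) * h₁ :=
      Subgroup.mem_center_iff.mp hcen h₁
    have hrw : h₁ * n₂' = (n₂' * x⁻¹) * (h₁ * x) := by
      calc h₁ * n₂' = h₁ * (n₂' * x⁻¹) * x := by group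
        _ = (n₂' * x⁻¹) * h₁ * x := by rw [hx1]
        _ = (n₂' * x⁻¹) * (h₁ * x) := by group
    rw [hrw]
    exact Subgroup.mul_mem_sup
      (Subgroup.mem_inf.mpr ⟨mul_mem hn₂' (inv_mem hxN₂), hcen⟩)
      (Subgroup.mem_inf.mpr ⟨mul_mem hh₁N (hle hxN₂), mul_mem hh₁H hxH⟩)
  -- (2a) reverse
  have rev2a : (N₂ ⊓ Subgroup.center G) ⊔ (N₁ ⊓ H) ≤
      N₁ ⊓ Subgroup.centralizer (N₁ : Set G) := by
    refine sup_le
      (le_inf (inf_le_left.trans hle)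
        (inf_le_right.trans (Subgroup.center_le_centralizer _)))
      (le_inf inf_le_left ?_)
    intro x hx
    exact Subgroup.mem_centralizer_iff.mpr fun n hn =>
      (hsp1.commute n hn x (Subgroup.mem_inf.mp hx).2).eq
  have h2a : N₁ ⊓ Subgroup.centralizer (N₁ : Set G) =
      (N₂ ⊓ Subgroup.center G) ⊔ (N₁ ⊓ H) := le_antisymm fwd2a rev2a
  -- (2b)
  have h2b : N₁ ⊓ Subgroup.centralizer (N₁ : Set G) =
      (N₁ ⊓ Subgroup.center G) ⊔ (N₂ ⊓ H) := by
    refine le_antisymm ?_ (sup_le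
      (le_inf inf_le_left (inf_le_right.trans (Subgroup.center_le_centralizer _)))
      (le_inf (inf_le_left.trans hle) ?_))
    · intro z hz
      obtain ⟨hz1, hz2⟩ := Subgroup.mem_inf.mp hz
      have hzc : ∀ n ∈ N₁, Commute z n := fun n hn =>
        (Subgroup.mem_centralizer_iff.mp hz2 n hn).symm
      have hzc2 : ∀ p ∈ N₂ ⊔ H, Commute z p :=
        hcomm2 (fun n hn => hzc n (hle hn)) (fun h hh => hsp1.commute z hz1 h hh)
      obtain ⟨x, hxHN, hcen⟩ :=
        IsSpecialPair.core hA hcyc hfin hsp2 (hsp1.comm_mem z hz1) hzc2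
      obtain ⟨hxH, hxN₂⟩ := Subgroup.mem_inf.mp hxHN
      have := Subgroup.mul_mem_sup
        (Subgroup.mem_inf.mpr ⟨mul_mem hz1 (inv_mem (hle hxN₂)), hcen⟩ :
          z * x⁻¹ ∈ N₁ ⊓ Subgroup.center G)
        (Subgroup.mem_inf.mpr ⟨hxN₂, hxH⟩ : x ∈ N₂ ⊓ H)
      simpa using this
    · intro x hx
      exact Subgroup.mem_centralizer_iff.mpr fun n hn =>
        (hsp1.commute n hn x (Subgroup.mem_inf.mp hx).2).eq
  -- (3)
  have h3 : N₁ ⊓ Subgroup.center G =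
      (N₂ ⊓ Subgroup.center G) ⊔ (H ⊓ N₁ ⊓ Subgroup.center G) := by
    refine le_antisymm ?_ (sup_le (inf_le_inf_right _ hle)
      (le_inf (inf_le_left.trans inf_le_right) inf_le_right))
    intro z hz
    obtain ⟨hz1, hzZ⟩ := Subgroup.mem_inf.mp hz
    have hz' : z ∈ (N₂ ⊓ Subgroup.center G) ⊔ (N₁ ⊓ H) := by
      rw [← h2a]
      exact Subgroup.mem_inf.mpr ⟨hz1, Subgroup.center_le_centralizer _ hzZ⟩
    have hinfn : (N₁ ⊓ H).Normal := ⟨fun x hx g => Subgroup.mem_inf.mpr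
      ⟨hN1n.conj_mem x (Subgroup.mem_inf.mp hx).1 g,
       hHn.conj_mem x (Subgroup.mem_inf.mp hx).2 g⟩⟩
    obtain ⟨cz, hcz, h, hh, rfl⟩ := decomp hinfn hz'
    obtain ⟨hczN₂, hczZ⟩ := Subgroup.mem_inf.mp hcz
    have hhZ : h ∈ Subgroup.center G := by
      have := mul_mem (inv_mem hczZ) hzZ
      simpa [mul_assoc] using this
    obtain ⟨hhN₁, hhH⟩ := Subgroup.mem_inf.mp hh
    exact Subgroup.mul_mem_sup hcz
      (Subgroup.mem_inf.mpr ⟨Subgroup.mem_inf.mpr ⟨hhH, hhN₁⟩, hhZ⟩)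
  exact ⟨h1a, h1b, h2a, h2b, h3⟩
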